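/- For the second-order Winfree model with inertia, suppose $\sup_{t\in[0,T]}\mathcal{D}(\Theta_t) \le D$ and let $m_0 = \max\{\mathcal{D}(\Omega_0), (\mathcal{D}(\nu)+2\kappa D)/\gamma\}$. Then for all $i,j$ and $t\in(0,T)$: $|\frac{d}{dt}(\omega^{ij}_t + \gamma\theta^{ij}_t)| \le \mathcal{D}(\nu) + \frac{4\kappa}{\gamma}m_0 + 3\kappa D^2 + 2\kappa D$. -/

import Mathlib

/-
The inertia term cancels in `ω^{ij} + γθ^{ij}`: its derivative is
`ν^{ij} - (κ/N)(sin θ^i - sin θ^j) ∑ₖ (1 + cos θ^k)`, bounded by `𝒟(ν) + 2κ𝒟(Θ) ≤ 𝒟(ν) + 2κD`,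
and the remaining terms of the claimed bound are nonnegative.
-/

open Real

/-- Diameter of a vector in `ℝ^N`: `𝒟(x) = max_{i,j} |x^i - x^j|`. -/
noncomputable def vdiam {N : ℕ} (x : Fin N → ℝ) : ℝ := ⨆ i, ⨆ j, |x i - x j|

lemma abs_sub_le_vdiam {N : ℕ} (x : Fin N → ℝ) (i j : Fin N) : |x i - x j| ≤ vdiam x :=
  (le_ciSup (Set.finite_range _).bddAbove j).trans
    (le_ciSup (f := fun i => ⨆ j, |x i - x j|) (Set.finite_range _).bddAbove i)

lemma vdiam_nonneg {N : ℕ} (x : Fin N → ℝ) : 0 ≤ vdiam x :=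
  Real.iSup_nonneg fun _ => Real.iSup_nonneg fun _ => abs_nonneg _

lemma abs_sum_one_add_cos_le {ι : Type*} [Fintype ι] (x : ι → ℝ) :
    |∑ k, (1 + cos (x k))| ≤ 2 * Fintype.card ι := by
  calc |∑ k, (1 + cos (x k))| ≤ ∑ k, |1 + cos (x k)| := Finset.abs_sum_le_sum_abs _ _
    _ ≤ ∑ _k : ι, (2 : ℝ) := Finset.sum_le_sum fun k _ =>
        abs_le.2 ⟨by linarith [neg_one_le_cos (x k)], by linarith [cos_le_one (x k)]⟩
    _ = 2 * Fintype.card ι := by simp [mul_comm]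

lemma abs_winfree_coupling_sub_le {N : ℕ} {κ : ℝ} (hκ : 0 ≤ κ) (x : Fin N → ℝ) (i j : Fin N) :
    |κ / N * (sin (x i) - sin (x j)) * ∑ k, (1 + cos (x k))| ≤ 2 * κ * |x i - x j| := by
  have hκN : κ / N * N ≤ κ := by
    rcases eq_or_ne (N : ℝ) 0 with hN | hN
    · simpa [hN] using hκ
    · rw [div_mul_cancel₀ _ hN]
  have hsum := abs_sum_one_add_cos_le x
  rw [Fintype.card_fin] at hsum
  calc |κ / N * (sin (x i) - sin (x j)) * ∑ k, (1 + cos (x k))|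
      = κ / N * |sin (x i) - sin (x j)| * |∑ k, (1 + cos (x k))| := by
        rw [abs_mul, abs_mul, abs_of_nonneg (by positivity : 0 ≤ κ / N)]
    _ ≤ κ / N * |x i - x j| * (2 * N) := by
        have := abs_sin_sub_sin_le (x i) (x j)
        gcongr
    _ = 2 * (κ / N * N) * |x i - x j| := by ring
    _ ≤ 2 * κ * |x i - x j| := by gcongr

lemma hasDerivAt_relative_momentum {N : ℕ} {θ ω : Fin N → ℝ → ℝ} {ν : Fin N → ℝ} {γ κ t : ℝ}
    (hθ : ∀ i, HasDerivAt (θ i) (ω i t) t)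
    (hω : ∀ i, HasDerivAt (ω i)
      (-γ * ω i t + ν i - κ / N * sin (θ i t) * ∑ j, (1 + cos (θ j t))) t) (i j : Fin N) :
    HasDerivAt (fun s => (ω i s - ω j s) + γ * (θ i s - θ j s))
      ((ν i - ν j) - κ / N * (sin (θ i t) - sin (θ j t)) * ∑ k, (1 + cos (θ k t))) t := by
  refine (((hω i).sub (hω j)).add (((hθ i).sub (hθ j)).const_mul γ)).congr_deriv ?_
  ring

theorem stmt8_general (N : ℕ) (θ ω : Fin N → ℝ → ℝ) (ν : Fin N → ℝ)
    (γ κ : ℝ) (hγ : 0 < γ) (hκ : 0 ≤ κ)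
    (hθ : ∀ i, ∀ t : ℝ, HasDerivAt (θ i) (ω i t) t)
    (hω : ∀ i, ∀ t : ℝ, HasDerivAt (ω i)
      (-γ * ω i t + ν i - κ / N * Real.sin (θ i t) * ∑ j, (1 + Real.cos (θ j t))) t)
    (T D : ℝ)
    (hsup : ∀ t ∈ Set.Icc (0:ℝ) T, vdiam (fun i => θ i t) ≤ D)
    (m₀ : ℝ) (hm₀ : m₀ = max (vdiam (fun i => ω i 0)) ((vdiam ν + 2 * κ * D) / γ)) :
    ∀ i j, ∀ t ∈ Set.Ioo (0:ℝ) T, ∃ d : ℝ,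
      HasDerivAt (fun s => (ω i s - ω j s) + γ * (θ i s - θ j s)) d t ∧
      |d| ≤ vdiam ν + 4 * κ / γ * m₀ + 3 * κ * D ^ 2 + 2 * κ * D := by
  intro i j t ht
  refine ⟨_, hasDerivAt_relative_momentum (fun i => hθ i t) (fun i => hω i t) i j, ?_⟩
  have hdiam : |θ i t - θ j t| ≤ D :=
    (abs_sub_le_vdiam (fun k => θ k t) i j).trans (hsup t (Set.Ioo_subset_Icc_self ht))
  have hD : 0 ≤ D := (abs_nonneg _).trans hdiam
  have hm₀ : 0 ≤ m₀ := hm₀ ▸ (vdiam_nonneg _).trans (le_max_left _ _)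
  have hcoupling := abs_winfree_coupling_sub_le hκ (fun k => θ k t) i j
  calc _ ≤ |ν i - ν j| + 2 * κ * |θ i t - θ j t| := (abs_sub _ _).trans (by gcongr)
    _ ≤ vdiam ν + 2 * κ * D := by gcongr; exact abs_sub_le_vdiam ν i j
    _ ≤ _ := by
      have : 0 ≤ 4 * κ / γ * m₀ := by positivity
      have : 0 ≤ 3 * κ * D ^ 2 := by positivity
      linarith

/-- Absolute bound on the derivative of `ω^{ij} + γθ^{ij}` for the
second-order Winfree model with inertia, under the a priori phase-diameter
bound `𝒟(Θ_t) ≤ D` on `[0,T]`, with `m₀ = max{𝒟(Ω₀), (𝒟(ν)+2κD)/γ}`. -/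
theorem stmt8 (N : ℕ) (hN : 0 < N) (θ ω : Fin N → ℝ → ℝ) (ν : Fin N → ℝ)
    (γ κ : ℝ) (hγ : 0 < γ) (hκ : 0 ≤ κ)
    (hθ : ∀ i, ∀ t : ℝ, HasDerivAt (θ i) (ω i t) t)
    (hω : ∀ i, ∀ t : ℝ, HasDerivAt (ω i)
      (-γ * ω i t + ν i - κ / N * Real.sin (θ i t) * ∑ j, (1 + Real.cos (θ j t))) t)
    (T D : ℝ) (hT : 0 < T) (hD : 0 < D)
    (hsup : ∀ t ∈ Set.Icc (0:ℝ) T, vdiam (fun i => θ i t) ≤ D)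
    (m₀ : ℝ) (hm₀ : m₀ = max (vdiam (fun i => ω i 0)) ((vdiam ν + 2 * κ * D) / γ)) :
    ∀ i j, ∀ t ∈ Set.Ioo (0:ℝ) T, ∃ d : ℝ,
      HasDerivAt (fun s => (ω i s - ω j s) + γ * (θ i s - θ j s)) d t ∧
      |d| ≤ vdiam ν + 4 * κ / γ * m₀ + 3 * κ * D ^ 2 + 2 * κ * D :=
  stmt8_general N θ ω ν γ κ hγ hκ hθ hω T D hsup m₀ hm₀
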